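/- Let p_1 ≥ ⋯ ≥ p_m > 0 with n ≤ m, and suppose density matrices ρ_i and a POVM Π_i on ℂ^n achieve Σ_i p_i Tr(Π_i ρ_i) = Σ_{i=1}^n p_i. Then Σ_{i=1}^m λ_max(Π_i) = n. -/

import Mathlib

/-!
Write `λᵢ = λ_max(Πᵢ)`. Since `0 ≤ Πᵢ ≤ 1` we have `λᵢ ∈ [0, 1]`, and `λᵢ ≤ tr Πᵢ` gives
`∑ λᵢ ≤ tr 1 = n`. Conversely `λᵢ • 1 - Πᵢ ≥ 0` and `ρᵢ ≥ 0` with trace one give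
`Tr(Πᵢ ρᵢ) ≤ λᵢ`, so optimality yields `∑_{i<n} pᵢ ≤ ∑ pᵢ λᵢ`.
Comparing termwise with `q = p_{n-1}`, `pᵢ λᵢ - q λᵢ ≤ pᵢ - q` for `i < n` and `≤ 0` otherwise,
so `∑ pᵢ λᵢ ≤ ∑_{i<n} pᵢ - n q + q ∑ λᵢ`, whence `n ≤ ∑ λᵢ`.
-/

open Matrix ComplexOrder

/-- The largest eigenvalue of a Hermitian matrix. -/
noncomputable def lamMax {n : ℕ} {A : Matrix (Fin n) (Fin n) ℂ} (hA : A.IsHermitian) : ℝ :=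
  ⨆ i, hA.eigenvalues i

lemma natCast_le_sum_of_sum_lt_le_sum_mul {m n : ℕ} (hnm : n ≤ m) {p x : Fin m → ℝ}
    (hp : ∀ i, 0 < p i) (hp_anti : Antitone p) (hx0 : ∀ i, 0 ≤ x i) (hx1 : ∀ i, x i ≤ 1)
    (h : ∑ i ∈ Finset.univ.filter (fun i : Fin m => (i : ℕ) < n), p i ≤ ∑ i, p i * x i) :
    (n : ℝ) ≤ ∑ i, x i := by
  rcases n.eq_zero_or_pos with rfl | hn
  · simpa using Finset.sum_nonneg fun i _ => hx0 i
  set k : Fin m := ⟨n - 1, by omega⟩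
  have hterm : ∀ i, p i * x i - p k * x i ≤ if (i : ℕ) < n then p i - p k else 0 := by
    intro i
    split_ifs with hi
    · have : p k ≤ p i := hp_anti (Fin.le_def.mpr (by simp [k]; omega))
      nlinarith [hx1 i]
    · have : p i ≤ p k := hp_anti (Fin.le_def.mpr (by simp [k]; omega))
      nlinarith [hx0 i]
  have hsum : ∑ i : Fin m, (if (i : ℕ) < n then p i - p k else 0) =
      ∑ i ∈ Finset.univ.filter (fun i : Fin m => (i : ℕ) < n), p i - n * p k := by
    rw [← Finset.sum_filter, Finset.sum_sub_distrib, Finset.sum_const, Fin.card_filter_val_lt,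
      min_eq_right hnm, nsmul_eq_mul]
  have key := Finset.sum_le_sum fun i (_ : i ∈ Finset.univ) => hterm i
  rw [hsum, Finset.sum_sub_distrib, ← Finset.mul_sum] at key
  exact le_of_mul_le_mul_left (by linarith) (hp k)

namespace Matrix

variable {n 𝕜 : Type*} [RCLike 𝕜]

open scoped MatrixOrder in
lemma PosSemidef.trace_mul_nonneg [Fintype n] [DecidableEq n] {A B : Matrix n n 𝕜} (hA : A.PosSemidef)
    (hB : B.PosSemidef) : 0 ≤ (A * B).trace := by
  have hS : (CFC.sqrt A).PosSemidef := (CFC.sqrt_nonneg A).posSemidef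
  rw [← CFC.sqrt_mul_sqrt_self A hA.nonneg, Matrix.mul_assoc, trace_mul_comm]
  simpa [Matrix.mul_assoc, hS.isHermitian.eq] using
    (hB.mul_mul_conjTranspose_same (CFC.sqrt A)).trace_nonneg

open scoped MatrixOrder in
lemma PosSemidef.one_sub_of_sum_eq_one [DecidableEq n] {ι : Type*} [Fintype ι]
    {P : ι → Matrix n n 𝕜} (hP : ∀ i, (P i).PosSemidef) (hsum : ∑ i, P i = 1) (i : ι) :
    (1 - P i).PosSemidef := by
  rw [← le_iff, ← hsum]
  exact Finset.single_le_sum (fun j _ => (hP j).nonneg) (Finset.mem_univ i)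

lemma IsHermitian.posSemidef_smul_one_sub_iff [Fintype n] [DecidableEq n] {A : Matrix n n 𝕜}
    (hA : A.IsHermitian) (c : ℝ) :
    ((c : 𝕜) • 1 - A).PosSemidef ↔ ∀ i, hA.eigenvalues i ≤ c := by
  have h : (c : 𝕜) • 1 - A = Unitary.conjStarAlgAut 𝕜 _ hA.eigenvectorUnitary
      (diagonal fun i => ((c - hA.eigenvalues i : ℝ) : 𝕜)) := by
    conv_lhs => rw [hA.spectral_theorem]
    rw [← map_one (Unitary.conjStarAlgAut 𝕜 _ hA.eigenvectorUnitary), ← map_smul, ← map_sub]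
    congr 1
    ext i j
    by_cases hij : i = j <;> simp [hij, Algebra.algebraMap_eq_smul_one, sub_smul]
  rw [h, Unitary.conjStarAlgAut_apply, Unitary.isUnit_coe.posSemidef_star_right_conjugate_iff]
  simp [posSemidef_diagonal_iff]

end Matrix

section lamMax

variable {k : ℕ} {A B : Matrix (Fin k) (Fin k) ℂ}

lemma eigenvalues_le_lamMax (hA : A.IsHermitian) (i : Fin k) : hA.eigenvalues i ≤ lamMax hA :=
  le_ciSup (Set.finite_range _).bddAbove i

lemma lamMax_nonneg (hA : A.PosSemidef) : 0 ≤ lamMax hA.isHermitian :=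
  Real.iSup_nonneg hA.eigenvalues_nonneg

lemma lamMax_le_one (hA : A.IsHermitian) (h : (1 - A).PosSemidef) : lamMax hA ≤ 1 :=
  Real.iSup_le ((hA.posSemidef_smul_one_sub_iff 1).mp (by simpa using h)) zero_le_one

lemma lamMax_le_re_trace (hA : A.PosSemidef) : lamMax hA.isHermitian ≤ A.trace.re := by
  have htr : A.trace.re = ∑ i, hA.isHermitian.eigenvalues i := by
    simp [hA.isHermitian.trace_eq_sum_eigenvalues, Complex.re_sum]
  refine Real.iSup_le (fun i => ?_) (Complex.nonneg_iff.mp hA.trace_nonneg).1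
  rw [htr]
  exact Finset.single_le_sum (fun j _ => hA.eigenvalues_nonneg j) (Finset.mem_univ i)

lemma re_trace_mul_le_lamMax_mul (hA : A.IsHermitian) (hB : B.PosSemidef) :
    (A * B).trace.re ≤ lamMax hA * B.trace.re := by
  have h := ((hA.posSemidef_smul_one_sub_iff _).mpr (eigenvalues_le_lamMax hA)).trace_mul_nonneg hB
  rw [Matrix.sub_mul, trace_sub, smul_mul_assoc, Matrix.one_mul, trace_smul] at h
  simpa using (Complex.nonneg_iff.mp h).1

end lamMax

/-- If an encoding-retrieval setup attains the optimum `Σ_{i<n} p i`, then the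
maximal eigenvalues of its measurement operators sum to the dimension `n`. -/
theorem optimal_setup_lamMax_sum {n m : ℕ} (hnm : n ≤ m)
    (p : Fin m → ℝ) (hp_pos : ∀ i, 0 < p i)
    (hp_mono : ∀ i j : Fin m, i ≤ j → p j ≤ p i)
    (Pi : Fin m → Matrix (Fin n) (Fin n) ℂ) (hPi : ∀ i, (Pi i).PosSemidef)
    (hPisum : ∑ i, Pi i = 1)
    (ρ : Fin m → Matrix (Fin n) (Fin n) ℂ) (hρ : ∀ i, (ρ i).PosSemidef)
    (hρtr : ∀ i, (ρ i).trace = 1)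
    (hopt : ∑ i, (p i : ℂ) * (Pi i * ρ i).trace =
      ((∑ i ∈ Finset.univ.filter (fun i : Fin m => (i : ℕ) < n), p i : ℝ) : ℂ)) :
    ∑ i, lamMax (hPi i).isHermitian = (n : ℝ) := by
  have htrace : ∑ i, (Pi i).trace.re = n := by
    simpa [← Complex.re_sum, ← trace_sum] using congrArg (fun M => M.trace.re) hPisum
  have hopt_re : ∑ i ∈ Finset.univ.filter (fun i : Fin m => (i : ℕ) < n), p i =
      ∑ i, p i * (Pi i * ρ i).trace.re := by
    simpa [Complex.re_sum] using (congrArg Complex.re hopt).symm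
  refine le_antisymm (htrace ▸ Finset.sum_le_sum fun i _ => lamMax_le_re_trace (hPi i)) ?_
  refine natCast_le_sum_of_sum_lt_le_sum_mul hnm hp_pos hp_mono (fun i => lamMax_nonneg (hPi i))
    (fun i => lamMax_le_one _ (PosSemidef.one_sub_of_sum_eq_one hPi hPisum i)) ?_
  rw [hopt_re]
  gcongr with i
  · exact (hp_pos i).le
  · simpa [hρtr] using re_trace_mul_le_lamMax_mul (hPi i).isHermitian (hρ i)
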